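/- Let G be a [p, n, k] complex orthogonal design (COD). Then no row of G contains two distinct nonzero entries that are equal up to negation (i.e., two entries both of the form ±z_i, or both of the form ±z_i^*, for the same index i). -/

import Mathlib

open Matrix

/-- A formal entry of a complex orthogonal design: either `0`, or `± z_i`, or `± z_i^*`.
Here `sign = true` means sign `+1`, and `conj = true` means the conjugated symbol `z_i^*`. -/
inductive CODEntry (k : ℕ) : Type where
  | zero : CODEntry k
  | var (sign : Bool) (conj : Bool) (idx : Fin k) : CODEntry k
deriving DecidableEq

namespace CODEntry

variable {k k' : ℕ}

/-- Evaluate a formal entry at an assignment of complex values to the indeterminates. -/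
def eval (z : Fin k → ℂ) : CODEntry k → ℂ
  | zero => 0
  | var s c i => (if s then (1 : ℂ) else -1) * (if c then (starRingEnd ℂ) (z i) else z i)

/-- Formal negation of an entry. -/
def neg : CODEntry k → CODEntry k
  | zero => zero
  | var s c i => var (!s) c i

/-- Formal conjugation of an entry (with `0^* = 0`). -/
def conj : CODEntry k → CODEntry k
  | zero => zero
  | var s c i => var s (!c) i

/-- Optionally negate an entry. -/
def negIf (b : Bool) (e : CODEntry k) : CODEntry k := if b then e.neg else e

/-- Rename variables according to a permutation of the indices. -/
def rename (σ : Equiv.Perm (Fin k)) : CODEntry k → CODEntry k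
  | zero => zero
  | var s c i => var s c (σ i)

/-- Negate all instances of the variable `z_j`. -/
def negVar (j : Fin k) : CODEntry k → CODEntry k
  | zero => zero
  | var s c i => if i = j then var (!s) c i else var s c i

/-- Conjugate all instances of the variable `z_j` (swap `z_j ↔ z_j^*`). -/
def conjVar (j : Fin k) : CODEntry k → CODEntry k
  | zero => zero
  | var s c i => if i = j then var s (!c) i else var s c i

/-- Transport an entry along a map of variable index sets. -/
def mapIdx (f : Fin k → Fin k') : CODEntry k → CODEntry k'
  | zero => zero
  | var s c i => var s c (f i)

/-- Whether a (nonzero) entry is a conjugated symbol `± z_i^*`. -/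
def isConj : CODEntry k → Bool
  | zero => false
  | var _ c _ => c

/-- The index of the variable occurring in an entry, if any. -/
def index : CODEntry k → Option (Fin k)
  | zero => none
  | var _ _ i => some i

end CODEntry

/-- `G` is a `[p, n, k]` complex orthogonal design (COD): for every assignment of complex
values to the indeterminates, `Gᴴ * G = (|z_1|² + … + |z_k|²) • I_n`. -/
def IsCOD {p n k : ℕ} (G : Matrix (Fin p) (Fin n) (CODEntry k)) : Prop :=
  ∀ z : Fin k → ℂ,
    (G.map (CODEntry.eval z))ᴴ * (G.map (CODEntry.eval z)) =
      ((∑ i, Complex.normSq (z i) : ℝ) : ℂ) • (1 : Matrix (Fin n) (Fin n) ℂ)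

/-- The equivalence operations on `[p, n, k]` CODs. -/
inductive EquivOp (p n k : ℕ) : Type where
  | rowPerm (σ : Equiv.Perm (Fin p))
  | rowNeg (r : Fin p)
  | colPerm (σ : Equiv.Perm (Fin n))
  | colNeg (c : Fin n)
  | varRename (σ : Equiv.Perm (Fin k))
  | varNeg (i : Fin k)
  | varConj (i : Fin k)

namespace EquivOp

variable {p n k : ℕ}

/-- Apply an equivalence operation to a matrix of formal entries. -/
def apply (G : Matrix (Fin p) (Fin n) (CODEntry k)) :
    EquivOp p n k → Matrix (Fin p) (Fin n) (CODEntry k)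
  | rowPerm σ => fun r c => G (σ r) c
  | rowNeg r₀ => fun r c => if r = r₀ then (G r c).neg else G r c
  | colPerm σ => fun r c => G r (σ c)
  | colNeg c₀ => fun r c => if c = c₀ then (G r c).neg else G r c
  | varRename σ => fun r c => (G r c).rename σ
  | varNeg i => fun r c => (G r c).negVar i
  | varConj i => fun r c => (G r c).conjVar i

/-- The operation is a column permutation. -/
def IsColPerm : EquivOp p n k → Prop
  | colPerm _ => True
  | _ => False

/-- The operation is a column negation. -/
def IsColNeg : EquivOp p n k → Prop
  | colNeg _ => True
  | _ => False

/-- The operation is a variable renaming. -/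
def IsVarRename : EquivOp p n k → Prop
  | varRename _ => True
  | _ => False

/-- Where each row of the original matrix is sent by the operation. -/
def rowMap : EquivOp p n k → Equiv.Perm (Fin p)
  | rowPerm σ => σ⁻¹
  | _ => 1

end EquivOp

/-- Apply a finite sequence of equivalence operations, in order. -/
def applyOps {p n k : ℕ} (G : Matrix (Fin p) (Fin n) (CODEntry k))
    (ops : List (EquivOp p n k)) : Matrix (Fin p) (Fin n) (CODEntry k) :=
  ops.foldl EquivOp.apply G

/-- Where each row of the original matrix is sent by a sequence of operations. -/
def opsRowMap {p n k : ℕ} (ops : List (EquivOp p n k)) : Equiv.Perm (Fin p) :=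
  ops.foldl (fun τ op => op.rowMap * τ) 1

/-- An operation on a COD with `m + m` columns is column-restricted if, in case it is a
column permutation, it is the transposition of columns `i` and `m + i` for some `i`. -/
def EquivOp.ColumnRestricted {p m k : ℕ} : EquivOp p (m + m) k → Prop
  | .colPerm σ => ∃ i : Fin m, σ = Equiv.swap (Fin.castAdd m i) (Fin.natAdd m i)
  | _ => True

/-- `G` contains the `B_i` form submatrix on the `2m` rows selected by the embedding `f`:
the block matrix `((z_i I_m, M), (−Mᴴ, z_i^* I_m))` where `M` is the top-right block. -/
def ContainsBFormWith {p m k : ℕ} (G : Matrix (Fin p) (Fin (m + m)) (CODEntry k))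
    (i : Fin k) (f : Fin (m + m) ↪ Fin p) : Prop :=
  (∀ r s : Fin m, G (f (Fin.castAdd m r)) (Fin.castAdd m s) =
      if r = s then CODEntry.var true false i else CODEntry.zero) ∧
  (∀ r s : Fin m, G (f (Fin.natAdd m r)) (Fin.natAdd m s) =
      if r = s then CODEntry.var true true i else CODEntry.zero) ∧
  (∀ r s : Fin m, G (f (Fin.natAdd m r)) (Fin.castAdd m s) =
      ((G (f (Fin.castAdd m s)) (Fin.natAdd m r)).conj).neg)

/-- As `ContainsBFormWith`, and moreover the top-right block `M` is (formally)
skew-symmetric: `Mᵀ = −M`. -/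
def ContainsSkewBFormWith {p m k : ℕ} (G : Matrix (Fin p) (Fin (m + m)) (CODEntry k))
    (i : Fin k) (f : Fin (m + m) ↪ Fin p) : Prop :=
  ContainsBFormWith G i f ∧
  ∀ r s : Fin m, G (f (Fin.castAdd m s)) (Fin.natAdd m r) =
    (G (f (Fin.castAdd m r)) (Fin.natAdd m s)).neg

/-- `G` is in `B_i` form: after equivalence operations excluding column permutations
(and not renaming variables), it contains the `B_i` form submatrix. -/
def InBForm {p m k : ℕ} (G : Matrix (Fin p) (Fin (m + m)) (CODEntry k)) (i : Fin k) : Prop :=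
  ∃ ops : List (EquivOp p (m + m) k),
    (∀ op ∈ ops, ¬ op.IsColPerm ∧ ¬ op.IsVarRename) ∧
    ∃ f, ContainsBFormWith (applyOps G ops) i f

/-- `G` is in `B_i` form with skew-symmetric block `M_i`. -/
def InSkewBForm {p m k : ℕ} (G : Matrix (Fin p) (Fin (m + m)) (CODEntry k)) (i : Fin k) : Prop :=
  ∃ ops : List (EquivOp p (m + m) k),
    (∀ op ∈ ops, ¬ op.IsColPerm ∧ ¬ op.IsVarRename) ∧
    ∃ f, ContainsSkewBFormWith (applyOps G ops) i f

/-- `G` is a balanced complex orthogonal design (BCOD) with `2m` columns: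
a COD in which every row has exactly `m` zero entries (hence `m` nonzero ones),
every row is conjugation-separated, and for each variable `z_j` it is in `B_j` form
with skew-symmetric block `M_j`. -/
def IsBCOD {p m k : ℕ} (G : Matrix (Fin p) (Fin (m + m)) (CODEntry k)) : Prop :=
  IsCOD G ∧
  (∀ r : Fin p, (Finset.univ.filter fun c => G r c = CODEntry.zero).card = m) ∧
  (∀ r : Fin p,
      (∀ c, G r c ≠ CODEntry.zero → (G r c).isConj = true) ∨
      (∀ c, G r c ≠ CODEntry.zero → (G r c).isConj = false)) ∧
  (∀ j : Fin k, InSkewBForm G j)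

/-- `G` is the direct sum of `G₁` (on top) and `G₂` (below), where `G₁` and `G₂` use
disjoint sets of indeterminates, embedded into `Fin k` via `ι₁` and `ι₂`. -/
def IsDirectSumOf {p n k p₁ p₂ k₁ k₂ : ℕ} (hp : p = p₁ + p₂)
    (G : Matrix (Fin p) (Fin n) (CODEntry k))
    (G₁ : Matrix (Fin p₁) (Fin n) (CODEntry k₁))
    (G₂ : Matrix (Fin p₂) (Fin n) (CODEntry k₂))
    (ι₁ : Fin k₁ ↪ Fin k) (ι₂ : Fin k₂ ↪ Fin k) : Prop :=
  k = k₁ + k₂ ∧ (∀ a b, ι₁ a ≠ ι₂ b) ∧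
  ∀ (r : Fin p) (c : Fin n),
    if h : (r : ℕ) < p₁ then G r c = (G₁ ⟨(r : ℕ), h⟩ c).mapIdx (fun i => ι₁ i)
    else G r c = (G₂ ⟨(r : ℕ) - p₁, by have := r.isLt; omega⟩ c).mapIdx (fun i => ι₂ i)

/-- A COD is decomposable if, after a permutation of its rows, it can be expressed as
the direct sum of two (nonempty) CODs on disjoint sets of indeterminates. -/
def IsDecomposable {p n k : ℕ} (G : Matrix (Fin p) (Fin n) (CODEntry k)) : Prop :=
  ∃ (σ : Equiv.Perm (Fin p)) (p₁ p₂ k₁ k₂ : ℕ) (hp : p = p₁ + p₂)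
    (G₁ : Matrix (Fin p₁) (Fin n) (CODEntry k₁))
    (G₂ : Matrix (Fin p₂) (Fin n) (CODEntry k₂))
    (ι₁ : Fin k₁ ↪ Fin k) (ι₂ : Fin k₂ ↪ Fin k),
    0 < p₁ ∧ 0 < p₂ ∧ IsCOD G₁ ∧ IsCOD G₂ ∧
    IsDirectSumOf hp (fun r c => G (σ r) c) G₁ G₂ ι₁ ι₂

/-- Rows `r₁` and `r₂` of `G` form a pair: if `r₁` is `(α₁,…,α_m, β₁,…,β_m)` then `r₂`
is `(±β₁^*,…,±β_m^*, ±α₁^*,…,±α_m^*)` (the signs may differ from entry to entry). -/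
def IsPairRows {p m k : ℕ} (G : Matrix (Fin p) (Fin (m + m)) (CODEntry k))
    (r₁ r₂ : Fin p) : Prop :=
  ∀ s : Fin m,
    (∃ b : Bool, G r₂ (Fin.castAdd m s) = CODEntry.negIf b ((G r₁ (Fin.natAdd m s)).conj)) ∧
    (∃ b : Bool, G r₂ (Fin.natAdd m s) = CODEntry.negIf b ((G r₁ (Fin.castAdd m s)).conj))

/-! Put `z_i = 1` and all other indeterminates `0`. The evaluated design has orthonormal columns,
and an entry `±z_i` or `±z_i^*` becomes `±1`. A unit vector with an entry of modulus one vanishes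
elsewhere, so the column through such an entry in row `r` is a multiple of `e_r`; orthogonality
of the other columns to it forces the rest of row `r` to vanish, whereas a second entry equal to
`±` the first would evaluate to `±1` too. -/

namespace Matrix

variable {𝕜 m n : Type*} [RCLike 𝕜] [Fintype m] [DecidableEq n] {E : Matrix m n 𝕜}

theorem apply_eq_zero_of_row_ne [DecidableEq m] (hE : Eᴴ * E = 1) {r r' : m} {c : n}
    (hr : r' ≠ r) (h : ‖E r c‖ = 1) : E r' c = 0 := by
  have hcol : ∑ x, ‖E x c‖ ^ 2 = 1 := by
    have := congrFun (congrFun hE c) c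
    simp only [mul_apply, conjTranspose_apply, one_apply_eq, RCLike.star_def,
      RCLike.conj_mul] at this
    exact_mod_cast this
  rw [← Finset.add_sum_erase _ _ (Finset.mem_univ r), h, one_pow, add_eq_left,
    Finset.sum_eq_zero_iff_of_nonneg fun _ _ => by positivity] at hcol
  simpa using hcol r' (Finset.mem_erase.2 ⟨hr, Finset.mem_univ _⟩)

theorem apply_eq_zero_of_col_ne (hE : Eᴴ * E = 1) {r : m} {c c' : n}
    (hc : c ≠ c') (h : ‖E r c‖ = 1) : E r c' = 0 := by
  classical
  have hinner : star (E r c) * E r c' = 0 := by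
    have := congrFun (congrFun hE c) c'
    rwa [one_apply_ne hc, mul_apply, Finset.sum_eq_single r
      (fun r' _ hr' => by
        rw [conjTranspose_apply, apply_eq_zero_of_row_ne hE hr' h, star_zero, zero_mul])
      (fun hr => absurd (Finset.mem_univ r) hr)] at this
  have : E r c ≠ 0 := norm_ne_zero_iff.mp (h ▸ one_ne_zero)
  simpa [this] using hinner

end Matrix

namespace CODEntry

variable {k : ℕ}

@[simp]
theorem eval_neg (z : Fin k → ℂ) (e : CODEntry k) : e.neg.eval z = -e.eval z := by
  rcases e with _ | ⟨_ | _, _ | _, _⟩ <;> simp [neg, eval]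

theorem norm_eval_single (s c : Bool) (i : Fin k) :
    ‖(var s c i).eval (Pi.single i 1)‖ = 1 := by
  cases s <;> cases c <;> simp [eval]

end CODEntry

theorem IsCOD.conjTranspose_mul_self_map_eval_single {p n k : ℕ}
    {G : Matrix (Fin p) (Fin n) (CODEntry k)} (hG : IsCOD G) (i : Fin k) :
    (G.map (CODEntry.eval (Pi.single i 1)))ᴴ * G.map (CODEntry.eval (Pi.single i 1)) = 1 := by
  rw [hG, Finset.sum_eq_single i (fun j _ hj => by simp [hj]) (by simp)]
  simp

/-- no row of a `[p, n, k]` COD contains two distinct nonzero entries that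
are equal up to negation (both `±z_i`, or both `±z_i^*`, for the same index `i`). -/
theorem cod_no_repeats_in_row {p n k : ℕ}
    (G : Matrix (Fin p) (Fin n) (CODEntry k)) (hG : IsCOD G)
    (r : Fin p) (c₁ c₂ : Fin n) (hne : c₁ ≠ c₂) (h1 : G r c₁ ≠ CODEntry.zero) :
    G r c₁ ≠ G r c₂ ∧ G r c₁ ≠ (G r c₂).neg := by
  obtain ⟨s, b, i, hvar⟩ : ∃ s b i, G r c₁ = CODEntry.var s b i := by
    cases h : G r c₁ with
    | zero => exact absurd h h1
    | var s b i => exact ⟨s, b, i, rfl⟩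
  set E := G.map (CODEntry.eval (Pi.single i 1))
  have hunit : ‖E r c₁‖ = 1 := by simpa [E, hvar] using CODEntry.norm_eval_single s b i
  have hzero : E r c₂ = 0 :=
    Matrix.apply_eq_zero_of_col_ne (hG.conjTranspose_mul_self_map_eval_single i) hne hunit
  have hE₁ : E r c₁ ≠ 0 := norm_ne_zero_iff.mp (hunit ▸ one_ne_zero)
  refine ⟨fun h => hE₁ ?_, fun h => hE₁ ?_⟩
  · simpa [E, h] using hzero
  · simpa [E, h] using hzero
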